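/- arXiv:0709.4326 — 4 statements merged into one kernel-verified Lean document; each statement's English description precedes it below -/
import Mathlib

section
/- Let G be a finite group and H a subgroup. If H is nilpotent and subnormal in G, then the normal closure of H in G is nilpotent. -/
/-!
A subnormal `p`-subgroup `Q` of a finite group lies in every Sylow `p`-subgroup `S`: if `Q` is
proper, it lies in a proper normal subgroup `K`, where `S ⊓ K` is a Sylow subgroup of `K`, and
induction on the order applies. Hence `Q` lies in the `p`-core `O_p(G)`, the intersection of the
Sylow `p`-subgroups. A finite nilpotent group is generated by its Sylow subgroups, which are
normal in it; so a nilpotent subnormal `H` lies in the Fitting subgroup `F(G) = ∏ₚ O_p(G)`.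
This is a normal subgroup, and nilpotent as a product of pairwise commuting `p`-groups for
distinct primes `p`, so it contains the normal closure of `H`.
-/

/-- `A` is a normal subgroup of `B` (for subgroups of an ambient group `G`). -/
def NormalIn {G : Type*} [Group G] (A B : Subgroup G) : Prop :=
  A ≤ B ∧ ∀ b ∈ B, ∀ a ∈ A, b * a * b⁻¹ ∈ A

/-- `H` is subnormal in `G`: there is a chain `H = H₀ ⊴ H₁ ⊴ ⋯ ⊴ Hₙ = G`. -/
def Subnormal {G : Type*} [Group G] (H : Subgroup G) : Prop :=
  ∃ (n : ℕ) (c : ℕ → Subgroup G), c 0 = H ∧ c n = ⊤ ∧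
    ∀ i < n, NormalIn (c i) (c (i + 1))

open Subgroup

theorem NormalIn.normal_subgroupOf {G : Type*} [Group G] {A B : Subgroup G}
    (h : NormalIn A B) : (A.subgroupOf B).Normal :=
  ⟨fun a ha b => mem_subgroupOf.2 (h.2 b b.2 a ha)⟩

theorem Subnormal.isSubnormal {G : Type*} [Group G] {H : Subgroup G} (h : Subnormal H) :
    H.IsSubnormal := by
  obtain ⟨n, c, rfl, hn, hc⟩ := h
  suffices ∀ k ≤ n, (c (n - k)).IsSubnormal by simpa using this n le_rfl
  intro k hk
  induction k with
  | zero => simp [hn]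
  | succ k ih =>
    have hnormal := hc (n - (k + 1)) (by omega)
    rw [show n - (k + 1) + 1 = n - k by omega] at hnormal
    exact .step _ _ hnormal.1 (ih (by omega)) hnormal.normal_subgroupOf

namespace Subgroup

variable {G : Type*} [Group G] [Finite G]

theorem relIndex_sup_eq_relIndex_of_normal (H K : Subgroup G) [K.Normal] :
    H.relIndex (H ⊔ K) = H.relIndex K := by
  have hKH : K.relIndex H ≠ 0 := FiniteIndex.index_ne_zero
  have h := (relIndex_mul_relIndex (H ⊓ K) H (H ⊔ K) inf_le_left le_sup_left).trans
    (relIndex_mul_relIndex (H ⊓ K) K (H ⊔ K) inf_le_right le_sup_right).symm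
  rw [inf_relIndex_left, inf_relIndex_right, relIndex_sup_right] at h
  exact mul_left_cancel₀ hKH (h.trans (mul_comm _ _))

theorem relIndex_dvd_index_of_normal_right (H K : Subgroup G) [K.Normal] :
    H.relIndex K ∣ H.index :=
  relIndex_sup_eq_relIndex_of_normal H K ▸ relIndex_dvd_index_of_le le_sup_left

end Subgroup

namespace Sylow

variable {p : ℕ} [Fact p.Prime] {G : Type*} [Group G] [Finite G]

noncomputable def subgroupOfNormal (S : Sylow p G) (N : Subgroup G) [N.Normal] : Sylow p N :=
  S.isPGroup'.comap_subtype.toSylow fun h => S.not_dvd_index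
    (h.trans (relIndex_dvd_index_of_normal_right (S : Subgroup G) N))

theorem eq_top_of_forall_sylow_le {K : Subgroup G}
    (hK : ∀ (p : ℕ) [Fact p.Prime] (P : Sylow p G), (P : Subgroup G) ≤ K) : K = ⊤ := by
  refine eq_top_of_le_card _ (Nat.le_of_dvd Nat.card_pos ?_)
  refine (Nat.dvd_iff_prime_pow_dvd_dvd _ _).2 fun q k hq hqk => ?_
  have := Fact.mk hq
  exact ((default : Sylow q G).pow_dvd_card_of_pow_dvd_card hqk).trans (card_dvd_of_le (hK q _))

end Sylow

theorem IsPGroup.le_sylow_of_isSubnormal {p : ℕ} [Fact p.Prime] {G : Type*} [Group G] [Finite G]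
    {Q : Subgroup G} (hQ : IsPGroup p Q) (hsn : Q.IsSubnormal) (S : Sylow p G) : Q ≤ S := by
  induction hG : Nat.card G using Nat.strong_induction_on generalizing G with
  | _ n ih =>
  obtain rfl | ⟨K, hK, hQK, hKlt⟩ := hsn.lt_normal
  · exact hQ.le_sylow_of_normal S
  · have hcard : Nat.card K < n := hG ▸ lt_of_le_of_ne K.card_le_card_group
      fun h => hKlt.ne (K.card_eq_iff_eq_top.mp h)
    have hle := ih _ hcard hQ.comap_subtype hsn.subgroupOf (S.subgroupOfNormal K) rfl
    exact fun x hx => hle (x := ⟨x, hQK hx⟩) hx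

theorem Group.isNilpotent_iSup_of_commute {G : Type*} [Group G] {ι : Type*} [Fintype ι]
    [DecidableEq ι] {H : ι → Subgroup G}
    (hcomm : Pairwise fun i j => ∀ x y : G, x ∈ H i → y ∈ H j → Commute x y)
    [∀ i, Group.IsNilpotent (H i)] : Group.IsNilpotent (⨆ i, H i : Subgroup G) := by
  rw [← noncommPiCoprod_range (hcomm := hcomm)]
  exact Group.nilpotent_of_surjective _ (noncommPiCoprod hcomm).rangeRestrict_surjective

section Fitting

variable (p : ℕ) (G : Type*) [Group G]

def pCore : Subgroup G :=
  ⨅ S : Sylow p G, (S : Subgroup G)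

/-- For infinite `G` this is `⊥`, since then `Nat.card G = 0`. -/
def fittingSubgroup : Subgroup G :=
  ⨆ p : (Nat.card G).primeFactors, pCore p G

variable {p G}

theorem le_pCore_iff {Q : Subgroup G} : Q ≤ pCore p G ↔ ∀ S : Sylow p G, Q ≤ S :=
  le_iInf_iff

theorem isPGroup_pCore : IsPGroup p (pCore p G) :=
  (default : Sylow p G).isPGroup'.to_le (iInf_le _ _)

instance normal_pCore : (pCore p G).Normal where
  conj_mem x hx g := mem_iInf.2 fun S => by
    have hx' := mem_iInf.1 hx (g⁻¹ • S)
    rwa [Sylow.coe_subgroup_smul, mem_pointwise_smul_iff_inv_smul_mem, map_inv, inv_inv,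
      MulAut.smul_def, MulAut.conj_apply] at hx'

theorem pCore_eq_bot_of_not_dvd [Finite G] [Fact p.Prime] (hp : ¬p ∣ Nat.card G) :
    pCore p G = ⊥ := by
  refine eq_bot_of_card_eq _ (Nat.eq_one_of_dvd_one ?_)
  have hS := (default : Sylow p G).card_eq_multiplicity
  rw [Nat.factorization_eq_zero_of_not_dvd hp, pow_zero] at hS
  exact hS ▸ card_dvd_of_le (iInf_le _ _)

instance normal_fittingSubgroup : (fittingSubgroup G).Normal :=
  iSup_normal _

theorem pCore_le_fittingSubgroup [Finite G] [Fact p.Prime] : pCore p G ≤ fittingSubgroup G := by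
  by_cases hp : p ∣ Nat.card G
  · exact le_iSup (fun q : (Nat.card G).primeFactors => pCore q G)
      ⟨p, Nat.mem_primeFactors.2 ⟨Fact.out, hp, Nat.card_pos.ne'⟩⟩
  · exact (pCore_eq_bot_of_not_dvd hp).trans_le bot_le

theorem isNilpotent_fittingSubgroup [Finite G] : Group.IsNilpotent (fittingSubgroup G) := by
  have (p : (Nat.card G).primeFactors) : Fact (p : ℕ).Prime := ⟨Nat.prime_of_mem_primeFactors p.2⟩
  have (p : (Nat.card G).primeFactors) : Group.IsNilpotent (pCore p G) :=
    isPGroup_pCore.isNilpotent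
  refine Group.isNilpotent_iSup_of_commute fun p q hpq => ?_
  exact commute_of_normal_of_disjoint _ _ normal_pCore normal_pCore
    (IsPGroup.disjoint_of_ne p q (Subtype.coe_ne_coe.2 hpq) _ _ isPGroup_pCore isPGroup_pCore)

theorem le_fittingSubgroup_of_isSubnormal [Finite G] {H : Subgroup G} [Group.IsNilpotent H]
    (hH : H.IsSubnormal) : H ≤ fittingSubgroup G := by
  refine subgroupOf_eq_top.1 (Sylow.eq_top_of_forall_sylow_le fun p _ P => ?_)
  have hP : (P : Subgroup H).map H.subtype ≤ pCore p G := le_pCore_iff.2 fun S =>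
    (P.isPGroup'.map _).le_sylow_of_isSubnormal ((Normal.isSubnormal inferInstance).trans' hH) S
  rw [← comap_subtype, ← map_le_iff_le_comap]
  exact hP.trans pCore_le_fittingSubgroup

end Fitting

/-- If `H` is nilpotent and subnormal in the finite group `G`, then the normal
closure of `H` in `G` is nilpotent. -/
theorem stmt7 {G : Type*} [Group G] [Finite G] (H : Subgroup G)
    (hHnilp : Group.IsNilpotent H) (hHsub : Subnormal H) :
    Group.IsNilpotent (Subgroup.normalClosure (H : Set G)) := by
  have hle : normalClosure (H : Set G) ≤ fittingSubgroup G :=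
    normalClosure_le_normal (le_fittingSubgroup_of_isSubnormal hHsub.isSubnormal)
  have := isNilpotent_fittingSubgroup (G := G)
  exact Group.nilpotent_of_mulEquiv (subgroupOfEquivOfLe hle)
end

section
/- Let H be a subgroup of a finite group G. For any based subring S of the double coset ring R(G,H), the set Γ_S, defined as the union of all double cosets belonging to S, is a subgroup of G containing H. The assignment S ↦ Γ_S is a bijection between based subrings of R(G,H) and subgroups of G containing H, with inverse K ↦ R(K,H). -/
/-- The double coset `HxH` of a subgroup `H` at `x`. -/
def dc {G : Type*} [Group G] (H : Subgroup G) (x : G) : Set G :=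
  {z | ∃ h₁ ∈ H, ∃ h₂ ∈ H, z = h₁ * x * h₂}

/-- The product set `HxHyH`. -/
def dc3 {G : Type*} [Group G] (H : Subgroup G) (x y : G) : Set G :=
  {z | ∃ h₁ ∈ H, ∃ h₂ ∈ H, ∃ h₃ ∈ H, z = h₁ * x * h₂ * y * h₃}

/-- A based subring of the double coset ring `R(G,H)`, modeled by its set `C`
of basic elements (double cosets): `C` contains the trivial double coset `H`,
and is closed under the involution `HxH ↦ Hx⁻¹H` and under the product (if
`HxH, HyH ∈ C` and `HzH ⊆ HxHyH` then `HzH ∈ C`). -/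
structure BasedSub (G : Type*) [Group G] (H : Subgroup G) where
  C : Set (Set G)
  isDC : ∀ X ∈ C, ∃ x : G, X = dc H x
  one_mem : dc H 1 ∈ C
  inv_mem : ∀ x : G, dc H x ∈ C → dc H x⁻¹ ∈ C
  mul_mem : ∀ x y z : G, dc H x ∈ C → dc H y ∈ C → dc H z ⊆ dc3 H x y → dc H z ∈ C

section aux
variable {G : Type*} [Group G] {H : Subgroup G}

lemma mem_dc_self (H : Subgroup G) (x : G) : x ∈ dc H x :=
  ⟨1, H.one_mem, 1, H.one_mem, by simp⟩

lemma dc_eq_of_mem {x g : G} (hg : g ∈ dc H x) : dc H g = dc H x := by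
  obtain ⟨h1, h1H, h2, h2H, rfl⟩ := hg
  ext z
  constructor
  · rintro ⟨a, aH, b, bH, rfl⟩
    exact ⟨a * h1, H.mul_mem aH h1H, h2 * b, H.mul_mem h2H bH, by group⟩
  · rintro ⟨a, aH, b, bH, rfl⟩
    exact ⟨a * h1⁻¹, H.mul_mem aH (H.inv_mem h1H), h2⁻¹ * b,
      H.mul_mem (H.inv_mem h2H) bH, by group⟩

lemma dc_mul_subset {x y g g' : G} (hg : g ∈ dc H x) (hg' : g' ∈ dc H y) :
    dc H (g * g') ⊆ dc3 H x y := by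
  obtain ⟨h1, h1H, h2, h2H, rfl⟩ := hg
  obtain ⟨k1, k1H, k2, k2H, rfl⟩ := hg'
  rintro z ⟨a, aH, b, bH, rfl⟩
  exact ⟨a * h1, H.mul_mem aH h1H, h2 * k1, H.mul_mem h2H k1H, k2 * b,
    H.mul_mem k2H bH, by group⟩

lemma basedSub_ext {S T : BasedSub G H} (h : S.C = T.C) : S = T := by
  cases S; cases T; cases h; rfl

def gammaSubgroup (S : BasedSub G H) : Subgroup G where
  carrier := ⋃₀ S.C
  one_mem' := ⟨dc H 1, S.one_mem, mem_dc_self H 1⟩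
  inv_mem' := by
    rintro g ⟨X, XC, gX⟩
    obtain ⟨x, rfl⟩ := S.isDC X XC
    rw [← dc_eq_of_mem gX] at XC
    exact ⟨dc H g⁻¹, S.inv_mem g XC, mem_dc_self H g⁻¹⟩
  mul_mem' := by
    rintro g g' ⟨X, XC, gX⟩ ⟨Y, YC, gY⟩
    obtain ⟨x, rfl⟩ := S.isDC X XC
    obtain ⟨y, rfl⟩ := S.isDC Y YC
    exact ⟨dc H (g * g'), S.mul_mem x y (g * g') XC YC (dc_mul_subset gX gY),
      mem_dc_self H _⟩

lemma H_le_gamma (S : BasedSub G H) : H ≤ gammaSubgroup S := by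
  intro h hH
  exact ⟨dc H 1, S.one_mem, h, hH, 1, H.one_mem, by simp⟩

lemma mem_of_dc_eq {K : Subgroup G} (hHK : H ≤ K) {x k : G} (kK : k ∈ K)
    (h : dc H x = dc H k) : x ∈ K := by
  have hx := mem_dc_self H x
  rw [h] at hx
  obtain ⟨h1, h1H, h2, h2H, rfl⟩ := hx
  exact K.mul_mem (K.mul_mem (hHK h1H) kK) (hHK h2H)

lemma part3 {K : Subgroup G} (S : BasedSub G H) (h : ⋃₀ S.C = (K : Set G)) :
    S.C = {X | ∃ k ∈ K, X = dc H k} := by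
  ext X
  constructor
  · intro hX
    obtain ⟨x, rfl⟩ := S.isDC X hX
    have : x ∈ (K : Set G) := h ▸ ⟨_, hX, mem_dc_self H x⟩
    exact ⟨x, this, rfl⟩
  · rintro ⟨k, kK, rfl⟩
    have hk : k ∈ ⋃₀ S.C := h ▸ kK
    obtain ⟨X, XC, kX⟩ := hk
    obtain ⟨x, rfl⟩ := S.isDC X XC
    rwa [← dc_eq_of_mem kX] at XC

def canonS (K : Subgroup G) (hHK : H ≤ K) : BasedSub G H where
  C := {X | ∃ k ∈ K, X = dc H k}
  isDC := by rintro X ⟨k, _, rfl⟩; exact ⟨k, rfl⟩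
  one_mem := ⟨1, K.one_mem, rfl⟩
  inv_mem := by
    rintro x ⟨k, kK, hx⟩
    have xK : x ∈ K := mem_of_dc_eq hHK kK hx
    exact ⟨x⁻¹, K.inv_mem xK, rfl⟩
  mul_mem := by
    rintro x y z ⟨k, kK, hx⟩ ⟨k', k'K, hy⟩ hsub
    have xK : x ∈ K := mem_of_dc_eq hHK kK hx
    have yK : y ∈ K := mem_of_dc_eq hHK k'K hy
    have hz := hsub (mem_dc_self H z)
    obtain ⟨h1, h1H, h2, h2H, h3, h3H, rfl⟩ := hz
    exact ⟨_, K.mul_mem (K.mul_mem (K.mul_mem (K.mul_mem (hHK h1H) xK) (hHK h2H)) yK)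
      (hHK h3H), rfl⟩

lemma canonS_union (K : Subgroup G) (hHK : H ≤ K) :
    ⋃₀ (canonS K hHK).C = (K : Set G) := by
  ext g
  constructor
  · rintro ⟨X, ⟨k, kK, rfl⟩, h1, h1H, h2, h2H, rfl⟩
    exact K.mul_mem (K.mul_mem (hHK h1H) kK) (hHK h2H)
  · intro gK
    exact ⟨dc H g, ⟨g, gK, rfl⟩, mem_dc_self H g⟩

end aux

/-- For a based subring `S` of `R(G,H)`, `Γ_S = ⋃ S.C` is a subgroup of `G`
containing `H`; the assignment `S ↦ Γ_S` is a bijection onto the subgroups of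
`G` containing `H`, with inverse `K ↦ R(K,H)`. -/
theorem stmt10 {G : Type*} [Group G] [Finite G] (H : Subgroup G) :
    (∀ S : BasedSub G H, ∃! K : Subgroup G, (K : Set G) = ⋃₀ S.C ∧ H ≤ K) ∧
    (∀ K : Subgroup G, H ≤ K →
      ∃! S : BasedSub G H, ⋃₀ S.C = (K : Set G)) ∧
    (∀ K : Subgroup G, H ≤ K → ∀ S : BasedSub G H, ⋃₀ S.C = (K : Set G) →
      S.C = {X | ∃ k ∈ K, X = dc H k}) := by
  refine ⟨?_, ?_, ?_⟩
  · intro S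
    refine ⟨gammaSubgroup S, ⟨rfl, H_le_gamma S⟩, ?_⟩
    rintro K ⟨hK, -⟩
    exact SetLike.coe_injective (hK.trans rfl)
  · intro K hHK
    refine ⟨canonS K hHK, canonS_union K hHK, ?_⟩
    intro S hS
    exact basedSub_ext (part3 S hS)
  · intro K _ S hS
    exact part3 S hS
end

section
/- Let H be a subgroup of a finite group G and let R^(i) denote the i-th adjoint subring of the double coset ring R(G,H) (so R^(0) = R(G,H) and R^(i+1) is generated by the double cosets contained in some X·X* with X a double coset in R^(i)). Then Γ_{R^(i)} = H^(G,i), the i-th term of the series of successive normal closures of H in G. -/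
/-- The subgroup `Γ_{R^(i)}` attached to the `i`-th adjoint subring of the
double coset ring `R(G,H)`: `Γ_{R^(0)} = G`, and `Γ_{R^(i+1)}` is generated by
the supports `HxHx⁻¹H = X·X*` of `X = HxH` with `x ∈ Γ_{R^(i)}`. -/
def adjIter {G : Type*} [Group G] (H : Subgroup G) : ℕ → Subgroup G
  | 0 => ⊤
  | i + 1 => Subgroup.closure (⋃ x ∈ (adjIter H i : Set G), dc3 H x x⁻¹)

/-- The normal closure of `H` in `K`. -/
def ncl {G : Type*} [Group G] (H K : Subgroup G) : Subgroup G :=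
  Subgroup.closure {g | ∃ h ∈ H, ∃ k ∈ K, g = k * h * k⁻¹}

/-- The series of successive normal closures. -/
def sncSeries {G : Type*} [Group G] (H : Subgroup G) : ℕ → Subgroup G
  | 0 => ⊤
  | i + 1 => ncl H (sncSeries H i)

/-! Since `HxHx⁻¹H = H · xHx⁻¹ · H`, the subgroup generated by these sets for `x ∈ K` is the one
generated by `H` and its `K`-conjugates, i.e. the normal closure of `H` in `K`; induct on `i`. -/

section

variable {G : Type*} [Group G] (H K : Subgroup G)

lemma le_ncl : H ≤ ncl H K := fun h hh =>
  Subgroup.subset_closure ⟨h, hh, 1, K.one_mem, by simp⟩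

lemma conj_mem_ncl {h k : G} (hh : h ∈ H) (hk : k ∈ K) : k * h * k⁻¹ ∈ ncl H K :=
  Subgroup.subset_closure ⟨h, hh, k, hk, rfl⟩

lemma dc3_inv_subset_ncl {x : G} (hx : x ∈ K) : dc3 H x x⁻¹ ⊆ ncl H K := by
  rintro _ ⟨h₁, hh₁, h₂, hh₂, h₃, hh₃, rfl⟩
  have hmem : h₁ * (x * h₂ * x⁻¹) * h₃ ∈ ncl H K :=
    mul_mem (mul_mem (le_ncl H K hh₁) (conj_mem_ncl H K hh₂ hx)) (le_ncl H K hh₃)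
  simpa only [mul_assoc, SetLike.mem_coe] using hmem

lemma conj_mem_dc3_inv {h : G} (hh : h ∈ H) (x : G) : x * h * x⁻¹ ∈ dc3 H x x⁻¹ :=
  ⟨1, H.one_mem, h, hh, 1, H.one_mem, by group⟩

theorem closure_iUnion_dc3_inv_eq_ncl :
    Subgroup.closure (⋃ x ∈ (K : Set G), dc3 H x x⁻¹) = ncl H K := by
  apply le_antisymm
  · rw [Subgroup.closure_le, Set.iUnion₂_subset_iff]
    exact fun x hx => dc3_inv_subset_ncl H K hx
  · rw [ncl, Subgroup.closure_le]
    rintro _ ⟨h, hh, k, hk, rfl⟩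
    exact Subgroup.subset_closure (Set.mem_biUnion hk (conj_mem_dc3_inv H hh k))

end

theorem stmt11_general {G : Type*} [Group G] (H : Subgroup G) (i : ℕ) :
    adjIter H i = sncSeries H i := by
  induction i with
  | zero => rfl
  | succ i ih => rw [adjIter, sncSeries, ih, closure_iUnion_dc3_inv_eq_ncl]

/-- `Γ_{R^(i)} = H^(G,i)` for every `i`. -/
theorem stmt11 {G : Type*} [Group G] [Finite G] (H : Subgroup G) (i : ℕ) :
    adjIter H i = sncSeries H i :=
  stmt11_general H i
end

section
/- Let H be a subgroup of a finite group G. The double coset ring R(G,H) is nilpotent (as a based ring) if and only if H is subnormal in G; moreover, when it is nilpotent, its nilpotency class equals the defect of H in G. -/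
section Aux

variable {G : Type*} [Group G] (H : Subgroup G)

lemma mem_ncl_of_conj {K : Subgroup G} {h k : G} (hh : h ∈ H) (hk : k ∈ K) :
    k * h * k⁻¹ ∈ ncl H K :=
  Subgroup.subset_closure ⟨h, hh, k, hk, rfl⟩

lemma H_le_ncl (K : Subgroup G) : H ≤ ncl H K := by
  intro h hh
  have := mem_ncl_of_conj H hh (K.one_mem)
  simpa using this

lemma ncl_le {K L : Subgroup G} (hHL : H ≤ L) (hKL : ∀ k ∈ K, ∀ h ∈ H, k * h * k⁻¹ ∈ L) :
    ncl H K ≤ L := by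
  apply (Subgroup.closure_le L).mpr
  rintro g ⟨h, hh, k, hk, rfl⟩
  exact hKL k hk h hh

lemma ncl_le_self {K : Subgroup G} (hHK : H ≤ K) : ncl H K ≤ K :=
  ncl_le H hHK (fun k hk h hh => mul_mem (mul_mem hk (hHK hh)) (inv_mem hk))

lemma ncl_mono {K K' : Subgroup G} (hK : K ≤ K') : ncl H K ≤ ncl H K' := by
  apply Subgroup.closure_mono
  rintro g ⟨h, hh, k, hk, rfl⟩
  exact ⟨h, hh, k, hK hk, rfl⟩

lemma ncl_conj {K : Subgroup G} {b : G} (hb : b ∈ K) {a : G} (ha : a ∈ ncl H K) :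
    b * a * b⁻¹ ∈ ncl H K := by
  induction ha using Subgroup.closure_induction with
  | mem x hx =>
      obtain ⟨h, hh, k, hk, rfl⟩ := hx
      have : b * (k * h * k⁻¹) * b⁻¹ = (b * k) * h * (b * k)⁻¹ := by group
      rw [this]
      exact mem_ncl_of_conj H hh (mul_mem hb hk)
  | one => simpa using (ncl H K).one_mem
  | mul x y hx hy px py =>
      have : b * (x * y) * b⁻¹ = (b * x * b⁻¹) * (b * y * b⁻¹) := by group
      rw [this]; exact mul_mem px py
  | inv x hx px =>
      have : b * x⁻¹ * b⁻¹ = (b * x * b⁻¹)⁻¹ := by group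
      rw [this]; exact inv_mem px

lemma ncl_normalIn {K : Subgroup G} (hHK : H ≤ K) : NormalIn (ncl H K) K :=
  ⟨ncl_le_self H hHK, fun b hb a ha => ncl_conj H hb ha⟩

lemma H_le_snc : ∀ i, H ≤ sncSeries H i
  | 0 => le_top
  | i + 1 => H_le_ncl H _

lemma adjIter_eq_snc : ∀ i, adjIter H i = sncSeries H i
  | 0 => rfl
  | i + 1 => by
    have ih := adjIter_eq_snc i
    show Subgroup.closure _ = ncl H (sncSeries H i)
    rw [ih]
    apply le_antisymm
    · apply (Subgroup.closure_le _).mpr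
      rintro z hz
      simp only [Set.mem_iUnion] at hz
      obtain ⟨x, hx, h₁, hh₁, h₂, hh₂, h₃, hh₃, rfl⟩ := hz
      have e1 : h₁ ∈ ncl H (sncSeries H i) := H_le_ncl H _ hh₁
      have e2 : x * h₂ * x⁻¹ ∈ ncl H (sncSeries H i) := mem_ncl_of_conj H hh₂ hx
      have e3 : h₃ ∈ ncl H (sncSeries H i) := H_le_ncl H _ hh₃
      have : h₁ * x * h₂ * x⁻¹ * h₃ = h₁ * (x * h₂ * x⁻¹) * h₃ := by group
      rw [this]
      exact mul_mem (mul_mem e1 e2) e3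
    · apply (Subgroup.closure_le _).mpr
      rintro g ⟨h, hh, k, hk, rfl⟩
      apply Subgroup.subset_closure
      simp only [Set.mem_iUnion]
      exact ⟨k, hk, 1, H.one_mem, h, hh, 1, H.one_mem, by group⟩

lemma snc_eq_H_iff_subnormal : (∃ n, sncSeries H n = H) ↔ Subnormal H := by
  constructor
  · rintro ⟨n, hn⟩
    refine ⟨n, fun i => sncSeries H (n - i), hn, by simp [sncSeries], ?_⟩
    intro i hi
    show NormalIn (sncSeries H (n - i)) (sncSeries H (n - (i + 1)))
    have : n - i = (n - (i + 1)) + 1 := by omega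
    rw [this]
    exact ncl_normalIn H (H_le_snc H _)
  · rintro ⟨n, c, hc0, hcn, hstep⟩
    refine ⟨n, le_antisymm ?_ (H_le_snc H n)⟩
    have key : ∀ i ≤ n, sncSeries H i ≤ c (n - i) := by
      intro i
      induction i with
      | zero => intro _; simp [sncSeries, hcn]
      | succ i ih =>
        intro hin
        have h1 : sncSeries H (i + 1) ≤ ncl H (c (n - i)) :=
          ncl_mono H (ih (by omega))
        have h2 : n - i = (n - (i + 1)) + 1 := by omega
        refine h1.trans ?_
        rw [h2]
        apply ncl_le
        · -- H ≤ c (n - (i+1))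
          have mono : ∀ j ≤ n, H ≤ c j := by
            intro j
            induction j with
            | zero => intro _; rw [hc0]
            | succ j ihj =>
              intro hj
              exact (ihj (by omega)).trans (hstep j (by omega)).1
          exact mono _ (by omega)
        · intro k hk h hh
          have mono : ∀ j ≤ n, H ≤ c j := by
            intro j
            induction j with
            | zero => intro _; rw [hc0]
            | succ j ihj =>
              intro hj
              exact (ihj (by omega)).trans (hstep j (by omega)).1
          exact (hstep _ (by omega)).2 k hk h (mono _ (by omega) hh)
    have := key n le_rfl
    simpa [hc0] using this

end Aux

/-- The double coset ring `R(G,H)` is nilpotent (i.e. `R^(n) = ℤ·1`, i.e.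
`adjIter H n = H`, for some `n`) iff `H` is subnormal in `G`; moreover the
nilpotency class (least such `n`) equals the defect of `H` in `G` (the least
`n` with `H^(G,n) = H`). -/
theorem stmt13 {G : Type*} [Group G] [Finite G] (H : Subgroup G) :
    ((∃ n : ℕ, adjIter H n = H) ↔ Subnormal H) ∧
    (∀ n : ℕ, (adjIter H n = H ∧ ∀ m < n, adjIter H m ≠ H) ↔
      (sncSeries H n = H ∧ ∀ m < n, sncSeries H m ≠ H)) := by
  constructor
  · simp only [adjIter_eq_snc]
    exact snc_eq_H_iff_subnormal H
  · intro n
    simp only [adjIter_eq_snc]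
end
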